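/- Let c : ℝ → ℝ be the function c(x) = exp(-1/x²)·sin²(1/x) for x ≠ 0, c(0) = 0. Then c has infinitely many local maxima accumulating at 0; more precisely, there exists a sequence xₙ → 0 of distinct points with xₙ ≠ 0 at which c attains a local maximum with c(xₙ) > 0. -/

import Mathlib

/-!
On each interval `[1/((k+1)π), 1/(kπ)]` the function `c` vanishes at both ends (zeros of `sin (1/x)`)
and is positive at `1/(π/2 + kπ)`, so its maximum on the interval is an interior local maximum.
These intervals are disjoint and shrink to `0`.
-/

open Filter Real Set

theorem exists_isLocalMax_mem_Ioo {α β : Type*} [ConditionallyCompleteLinearOrder α]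
    [TopologicalSpace α] [OrderTopology α] [LinearOrder β] [TopologicalSpace β]
    [ClosedIciTopology β] {f : α → β} {a b z : α} (hf : ContinuousOn f (Icc a b))
    (hz : z ∈ Icc a b) (ha : f a < f z) (hb : f b < f z) :
    ∃ x ∈ Ioo a b, IsLocalMax f x ∧ f z ≤ f x := by
  have hends : ∀ y ∈ Icc a b \ Ioo a b, f y < f z := by
    rintro y ⟨⟨hay, hyb⟩, hy⟩
    rcases hay.eq_or_lt with rfl | hay
    · exact ha
    · rwa [(hyb.eq_or_lt.resolve_right fun hyb => hy ⟨hay, hyb⟩)]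
  obtain ⟨x, hx, hmax⟩ := isCompact_Icc.exists_isMaxOn_mem_subset hf hz hends
  exact ⟨x, hx, hmax.isLocalMax (Icc_mem_nhds hx.1 hx.2), hmax hz⟩

section

variable {c : ℝ → ℝ}

theorem continuousOn_Ioi_of_eq_exp_mul_sin_sq
    (hc : ∀ x : ℝ, x ≠ 0 → c x = exp (-1 / x ^ 2) * sin (1 / x) ^ 2) :
    ContinuousOn c (Ioi 0) := by
  refine ContinuousOn.congr (fun x (hx : 0 < x) => ?_) fun x (hx : 0 < x) => hc x hx.ne'
  have hx2 : x ^ 2 ≠ 0 := by positivity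
  have hx0 : x ≠ 0 := hx.ne'
  exact (by fun_prop (disch := assumption) : ContinuousAt _ x).continuousWithinAt

theorem apply_inv_nat_mul_pi_eq_zero
    (hc : ∀ x : ℝ, x ≠ 0 → c x = exp (-1 / x ^ 2) * sin (1 / x) ^ 2) {k : ℕ} (hk : k ≠ 0) :
    c (k * π)⁻¹ = 0 := by
  rw [hc _ (by positivity), one_div, inv_inv, sin_nat_mul_pi, zero_pow two_ne_zero, mul_zero]

theorem apply_inv_pi_div_two_add_nat_mul_pi_pos
    (hc : ∀ x : ℝ, x ≠ 0 → c x = exp (-1 / x ^ 2) * sin (1 / x) ^ 2) (k : ℕ) :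
    0 < c (π / 2 + k * π)⁻¹ := by
  rw [hc _ (by positivity), one_div, inv_inv, sin_add_nat_mul_pi, sin_pi_div_two, mul_one]
  exact mul_pos (exp_pos _) (even_two.pow_pos (pow_ne_zero _ (neg_ne_zero.2 one_ne_zero)))

theorem exists_isLocalMax_pos_between_inv_nat_mul_pi
    (hc : ∀ x : ℝ, x ≠ 0 → c x = exp (-1 / x ^ 2) * sin (1 / x) ^ 2) {k : ℕ} (hk : k ≠ 0) :
    ∃ x ∈ Ioo (↑(k + 1) * π)⁻¹ (k * π)⁻¹, IsLocalMax c x ∧ 0 < c x := by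
  have hk' : (1 : ℝ) ≤ k := by exact_mod_cast Nat.one_le_iff_ne_zero.2 hk
  have hpeak : (π / 2 + k * π)⁻¹ ∈ Icc (↑(k + 1) * π)⁻¹ (k * π)⁻¹ := by
    push_cast
    constructor <;> gcongr <;> linarith [pi_pos]
  have hsub : Icc (↑(k + 1) * π)⁻¹ (k * π)⁻¹ ⊆ Ioi 0 := fun x hx =>
    lt_of_lt_of_le (by positivity) hx.1
  have hpos := apply_inv_pi_div_two_add_nat_mul_pi_pos hc k
  obtain ⟨x, hx, hmax, hle⟩ := exists_isLocalMax_mem_Ioo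
    ((continuousOn_Ioi_of_eq_exp_mul_sin_sq hc).mono hsub) hpeak
    (by rwa [apply_inv_nat_mul_pi_eq_zero hc k.succ_ne_zero])
    (by rwa [apply_inv_nat_mul_pi_eq_zero hc hk])
  exact ⟨x, hx, hmax, hpos.trans_le hle⟩

end

theorem stmt_6_general (c : ℝ → ℝ)
    (hc : ∀ x : ℝ, x ≠ 0 → c x = Real.exp (-1 / x^2) * (Real.sin (1 / x))^2) :
    ∃ x : ℕ → ℝ, Tendsto x atTop (nhds 0) ∧ Function.Injective x ∧
      ∀ n : ℕ, x n ≠ 0 ∧ IsLocalMax c (x n) ∧ 0 < c (x n) := by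
  choose x hx hmax hpos using fun n : ℕ =>
    exists_isLocalMax_pos_between_inv_nat_mul_pi hc n.succ_ne_zero
  have hx0 : ∀ n, 0 < x n := fun n => lt_trans (by positivity) (hx n).1
  have hanti : StrictAnti x := strictAnti_nat_of_succ_lt fun n => (hx (n + 1)).2.trans (hx n).1
  have hbound : Tendsto (fun n : ℕ => (↑(n + 1) * π)⁻¹) atTop (nhds 0) :=
    tendsto_inv_atTop_zero.comp <|
      ((tendsto_natCast_atTop_atTop.comp (tendsto_add_atTop_nat 1)).atTop_mul_const pi_pos)
  refine ⟨x, ?_, hanti.injective, fun n => ⟨(hx0 n).ne', hmax n, hpos n⟩⟩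
  exact tendsto_of_tendsto_of_tendsto_of_le_of_le tendsto_const_nhds hbound
    (fun n => (hx0 n).le) fun n => (hx n).2.le

theorem stmt_6 (c : ℝ → ℝ)
    (hc0 : c 0 = 0)
    (hc : ∀ x : ℝ, x ≠ 0 → c x = Real.exp (-1 / x^2) * (Real.sin (1 / x))^2) :
    ∃ x : ℕ → ℝ, Tendsto x atTop (nhds 0) ∧ Function.Injective x ∧
      ∀ n : ℕ, x n ≠ 0 ∧ IsLocalMax c (x n) ∧ 0 < c (x n) :=
  stmt_6_general c hc
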